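/- arXiv:2410.13347 — 6 statements merged into one kernel-verified Lean document; each statement's English description precedes it below -/
import Mathlib

section
/- (Abstract fixed-metric form of Proposition 1.1, lower semicontinuity on the finiteness set.) Assume the pair (a,e) satisfies the Poincaré hypothesis. Let k ≥ 1 be an integer. Let β and (β_n)_{n∈ℕ} be continuous symmetric bilinear forms on H with β(φ,φ) ≥ 0 and β_n(φ,φ) ≥ 0 for all φ ∈ H, with β(e,e) > 0 and β_n(e,e) > 0 for all n, with ‖β_n − β‖ → 0 as n → ∞, and with limsup_{n→∞} λ_k(β_n) < +∞. Then λ_k(β) ≤ liminf_{n→∞} λ_k(β_n). -/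
open scoped ENNReal

/-- The quotient `a(φ,φ)/β(φ,φ)` with the convention `+∞` if `β(φ,φ) = 0 < a(φ,φ)`
and `0` if both vanish. -/
noncomputable def rayleighQuot (A B : ℝ) : ℝ≥0∞ :=
  if B = 0 then (if A = 0 then 0 else ⊤) else ENNReal.ofReal (A / B)

/-- The `k`-th generalized eigenvalue `λ_k(β)`: the infimum over all `k`-dimensional
subspaces `V` of `{φ : β(e,φ) = 0}` of `sup_{φ ∈ V, φ ≠ 0} a(φ,φ)/β(φ,φ)`. -/
noncomputable def genEigenvalue {H : Type*} [NormedAddCommGroup H] [InnerProductSpace ℝ H]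
    (a : H →L[ℝ] H →L[ℝ] ℝ) (e : H) (k : ℕ) (β : H →L[ℝ] H →L[ℝ] ℝ) : ℝ≥0∞ :=
  ⨅ (V : Submodule ℝ H) (_ : Module.finrank ℝ V = k ∧ ∀ φ ∈ V, β e φ = 0),
    ⨆ (φ : H) (_ : φ ∈ V ∧ φ ≠ 0), rayleighQuot (a φ φ) (β φ φ)

/-- The Poincaré hypothesis for the pair `(a, e)`. -/
def PoincareHyp {H : Type*} [NormedAddCommGroup H] [InnerProductSpace ℝ H]
    (a : H →L[ℝ] H →L[ℝ] ℝ) (e : H) : Prop :=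
  ∃ C₀ : ℝ, 0 ≤ C₀ ∧ ∀ ℓ : H →L[ℝ] ℝ, ℓ e = 1 → ∀ φ : H, ℓ φ = 0 →
    ‖φ‖ ^ 2 ≤ (C₀ * ‖ℓ‖ ^ 2 + 1) * a φ φ

open Filter Topology

/-! Suppose `λ_k(b) < M` for a form `b` close to `β`, witnessed by a `k`-dimensional `V` on which
`b(e, ·) = 0` and `a ≤ M b`. Project `V` onto `ker β(e, ·)` along `e`: the projection is injective
on `V` because `b(e, e) ≠ 0`, leaves `a` unchanged because `a(e, ·) = 0`, and does not decrease `b`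
because `b(e, ·)` vanishes on `V`. The Poincaré inequality for the fixed functional `β(e, ·)` gives
`‖ψ‖² ≤ C a(ψ, ψ)` on the image, hence `b(ψ, ψ) ≤ β(ψ, ψ) + C ‖b - β‖ a(ψ, ψ)` and
`λ_k(β) ≤ M / (1 - M C ‖b - β‖)`. Applying this to `b = β_n` for the infinitely many `n` with
`λ_k(β_n) < M` and letting `‖β_n - β‖ → 0` gives `λ_k(β) ≤ M` for every `M` above the liminf. -/

theorem rayleighQuot_le_ofReal {A B M : ℝ} (hA : 0 ≤ A) (hM : 0 ≤ M) (h : A ≤ M * B) :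
    rayleighQuot A B ≤ ENNReal.ofReal M := by
  unfold rayleighQuot
  split_ifs with hB hA0
  · exact bot_le
  · exact absurd (le_antisymm (by simpa [hB] using h) hA) hA0
  · rcases Ne.lt_or_gt hB with hB | hB
    · exact ENNReal.ofReal_le_ofReal ((div_nonpos_of_nonneg_of_nonpos hA hB.le).trans hM)
    · exact ENNReal.ofReal_le_ofReal ((div_le_iff₀ hB).mpr h)

theorem le_mul_of_rayleighQuot_le_ofReal {A B M : ℝ} (hB : 0 ≤ B) (hM : 0 ≤ M)
    (h : rayleighQuot A B ≤ ENNReal.ofReal M) : A ≤ M * B := by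
  unfold rayleighQuot at h
  split_ifs at h with hB0 hA0
  · simp [hA0, hB0]
  · exact absurd h (by simp)
  · exact (div_le_iff₀ (hB.lt_of_ne' hB0)).mp ((ENNReal.ofReal_le_ofReal_iff hM).mp h)

section kerProjAlong

variable {K E : Type*} [Field K] [AddCommGroup E] [Module K E]

def kerProjAlong (f : E →ₗ[K] K) (v : E) : E →ₗ[K] E :=
  LinearMap.id - ((f v)⁻¹ • f).smulRight v

theorem kerProjAlong_apply (f : E →ₗ[K] K) (v x : E) :
    kerProjAlong f v x = x - ((f v)⁻¹ * f x) • v := by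
  simp [kerProjAlong]

theorem apply_kerProjAlong {f : E →ₗ[K] K} {v : E} (hv : f v ≠ 0) (x : E) :
    f (kerProjAlong f v x) = 0 := by
  rw [kerProjAlong_apply, map_sub, map_smul, smul_eq_mul, mul_right_comm, inv_mul_cancel₀ hv,
    one_mul, sub_self]

theorem finrank_map_kerProjAlong {f g : E →ₗ[K] K} {v : E}
    (hgv : g v ≠ 0) {V : Submodule K E} (hV : ∀ x ∈ V, g x = 0) :
    Module.finrank K (V.map (kerProjAlong f v)) = Module.finrank K V := by
  have hinj : Function.Injective (kerProjAlong f v ∘ₗ V.subtype) := by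
    rw [← LinearMap.ker_eq_bot, LinearMap.ker_eq_bot']
    rintro ⟨x, hxV⟩ hx
    have hx_eq : x = ((f v)⁻¹ * f x) • v := by
      simpa [kerProjAlong_apply, sub_eq_zero] using hx
    have hc : (f v)⁻¹ * f x = 0 := by
      have := congr_arg g hx_eq
      rwa [map_smul, hV x hxV, smul_eq_mul, eq_comm, mul_eq_zero, or_iff_left hgv] at this
    simpa [hc] using hx_eq
  rw [← LinearMap.finrank_range_of_inj hinj, LinearMap.range_comp, Submodule.range_subtype]

end kerProjAlong

section bilinear

variable {H : Type*} [NormedAddCommGroup H] [NormedSpace ℝ H]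

theorem apply_sub_smul_sub_smul {B : H →L[ℝ] H →L[ℝ] ℝ} (hB : ∀ x y, B x y = B y x) {x y : H}
    (hyx : B y x = 0) (c : ℝ) : B (x - c • y) (x - c • y) = B x x + c ^ 2 * B y y := by
  simp only [map_sub, map_smul, sub_apply, smul_apply, smul_eq_mul, hB x y, hyx]
  ring

theorem apply_self_le_add_opNorm_sub (b β : H →L[ℝ] H →L[ℝ] ℝ) (x : H) :
    b x x ≤ β x x + ‖b - β‖ * ‖x‖ ^ 2 := by
  have h := ((b - β) x x).le_norm_self.trans ((b - β).le_opNorm₂ x x)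
  simp only [sub_apply] at h
  linarith

end bilinear

section genEigenvalue

variable {H : Type*} [NormedAddCommGroup H] [InnerProductSpace ℝ H]
  {a β b : H →L[ℝ] H →L[ℝ] ℝ} {e : H} {k : ℕ}

theorem genEigenvalue_le_of_subspace (V : Submodule ℝ H) (hVk : Module.finrank ℝ V = k)
    (hVe : ∀ φ ∈ V, β e φ = 0) {c : ℝ≥0∞}
    (hc : ∀ φ ∈ V, φ ≠ 0 → rayleighQuot (a φ φ) (β φ φ) ≤ c) :
    genEigenvalue a e k β ≤ c :=
  iInf₂_le_of_le V ⟨hVk, hVe⟩ (iSup₂_le fun φ hφ => hc φ hφ.1 hφ.2)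

theorem exists_subspace_of_genEigenvalue_lt {c : ℝ≥0∞} (h : genEigenvalue a e k β < c) :
    ∃ V : Submodule ℝ H, Module.finrank ℝ V = k ∧ (∀ φ ∈ V, β e φ = 0) ∧
      ∀ φ ∈ V, φ ≠ 0 → rayleighQuot (a φ φ) (β φ φ) < c := by
  obtain ⟨V, hV⟩ := iInf_lt_iff.mp h
  obtain ⟨⟨hVk, hVe⟩, hlt⟩ := iInf_lt_iff.mp hV
  exact ⟨V, hVk, hVe, fun φ hφ hφ0 =>
    (le_iSup₂ (f := fun ψ (_ : ψ ∈ V ∧ ψ ≠ 0) => rayleighQuot (a ψ ψ) (β ψ ψ))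
      φ ⟨hφ, hφ0⟩).trans_lt hlt⟩

theorem PoincareHyp.exists_sq_norm_le (h : PoincareHyp a e) {f : H →L[ℝ] ℝ} (hf : f e ≠ 0) :
    ∃ C : ℝ, ∀ ψ, f ψ = 0 → ‖ψ‖ ^ 2 ≤ C * a ψ ψ := by
  obtain ⟨C₀, -, hC₀⟩ := h
  exact ⟨C₀ * ‖(f e)⁻¹ • f‖ ^ 2 + 1, fun ψ hψ => hC₀ _ (by simp [hf]) ψ (by simp [hψ])⟩

theorem rayleighQuot_sub_smul_le (ha_symm : ∀ φ ψ : H, a φ ψ = a ψ φ)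
    (ha_nonneg : ∀ φ : H, 0 ≤ a φ φ) (he : ∀ ψ : H, a e ψ = 0) {C : ℝ}
    (hC : ∀ ψ, β e ψ = 0 → ‖ψ‖ ^ 2 ≤ C * a ψ ψ) (hb_symm : ∀ φ ψ : H, b φ ψ = b ψ φ)
    (hbe : 0 ≤ b e e) {M : ℝ} (hM : 0 ≤ M) (hsmall : M * C * ‖b - β‖ < 1) {φ : H} {c : ℝ}
    (hφe : b e φ = 0) (hφ : a φ φ ≤ M * b φ φ) (hψ : β e (φ - c • e) = 0) :
    rayleighQuot (a (φ - c • e) (φ - c • e)) (β (φ - c • e) (φ - c • e))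
      ≤ ENNReal.ofReal (M / (1 - M * C * ‖b - β‖)) := by
  set ψ := φ - c • e
  set δ := ‖b - β‖
  have haψ : a ψ ψ = a φ φ := by
    rw [apply_sub_smul_sub_smul ha_symm (he φ), he e, mul_zero, add_zero]
  have hbψ : b φ φ ≤ β ψ ψ + δ * ‖ψ‖ ^ 2 := calc
    b φ φ ≤ b ψ ψ := by
      rw [apply_sub_smul_sub_smul hb_symm hφe]
      exact le_add_of_nonneg_right (mul_nonneg (sq_nonneg c) hbe)
    _ ≤ β ψ ψ + δ * ‖ψ‖ ^ 2 := apply_self_le_add_opNorm_sub b β ψ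
  have hgap : 0 < 1 - M * C * δ := sub_pos.mpr hsmall
  refine rayleighQuot_le_ofReal (ha_nonneg ψ) (div_nonneg hM hgap.le) ?_
  rw [div_mul_eq_mul_div, le_div_iff₀ hgap]
  calc a ψ ψ * (1 - M * C * δ) = a ψ ψ - M * δ * (C * a ψ ψ) := by ring
    _ ≤ M * b φ φ - M * δ * ‖ψ‖ ^ 2 :=
      sub_le_sub (haψ.trans_le hφ) (mul_le_mul_of_nonneg_left (hC ψ hψ) (by positivity))
    _ ≤ M * β ψ ψ := by linarith [mul_le_mul_of_nonneg_left hbψ hM]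

theorem genEigenvalue_le_of_genEigenvalue_lt (ha_symm : ∀ φ ψ : H, a φ ψ = a ψ φ)
    (ha_nonneg : ∀ φ : H, 0 ≤ a φ φ) (he : ∀ ψ : H, a e ψ = 0) {C : ℝ}
    (hC : ∀ ψ, β e ψ = 0 → ‖ψ‖ ^ 2 ≤ C * a ψ ψ) (hβe : β e e ≠ 0)
    (hb_symm : ∀ φ ψ : H, b φ ψ = b ψ φ) (hb_nonneg : ∀ φ : H, 0 ≤ b φ φ) (hbe : b e e ≠ 0)
    {M : ℝ} (hM : 0 ≤ M) (hsmall : M * C * ‖b - β‖ < 1)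
    (hlt : genEigenvalue a e k b < ENNReal.ofReal M) :
    genEigenvalue a e k β ≤ ENNReal.ofReal (M / (1 - M * C * ‖b - β‖)) := by
  obtain ⟨V, hVk, hVb, hVq⟩ := exists_subspace_of_genEigenvalue_lt hlt
  set T := kerProjAlong (β e : H →ₗ[ℝ] ℝ) e
  have hTe (φ : H) : β e (T φ) = 0 := apply_kerProjAlong (f := (β e : H →ₗ[ℝ] ℝ)) hβe φ
  refine genEigenvalue_le_of_subspace (V.map T) ?_ (by rintro _ ⟨φ, -, rfl⟩; exact hTe φ) ?_
  · rw [finrank_map_kerProjAlong (g := (b e : H →ₗ[ℝ] ℝ)) hbe hVb, hVk]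
  · rintro _ ⟨φ, hφV, rfl⟩ hTφ
    have hφ0 : φ ≠ 0 := by
      rintro rfl
      exact hTφ (map_zero T)
    have hφ := le_mul_of_rayleighQuot_le_ofReal (hb_nonneg φ) hM (hVq φ hφV hφ0).le
    have hψ := hTe φ
    rw [kerProjAlong_apply] at hψ ⊢
    exact rayleighQuot_sub_smul_le ha_symm ha_nonneg he hC hb_symm (hb_nonneg e) hM hsmall
      (hVb φ hφV) hφ hψ

end genEigenvalue

theorem stmt1_general {H : Type*} [NormedAddCommGroup H] [InnerProductSpace ℝ H]
    (a : H →L[ℝ] H →L[ℝ] ℝ)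
    (ha_symm : ∀ φ ψ : H, a φ ψ = a ψ φ)
    (ha_nonneg : ∀ φ : H, 0 ≤ a φ φ)
    (e : H) (he : ∀ ψ : H, a e ψ = 0)
    (hPoincare : PoincareHyp a e)
    (k : ℕ)
    (β : H →L[ℝ] H →L[ℝ] ℝ) (βn : ℕ → H →L[ℝ] H →L[ℝ] ℝ)
    (hβn_symm : ∀ n, ∀ φ ψ : H, βn n φ ψ = βn n ψ φ)
    (hβn_nonneg : ∀ n, ∀ φ : H, 0 ≤ βn n φ φ)
    (hβe : 0 < β e e) (hβne : ∀ n, 0 < βn n e e)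
    (hconv : Filter.Tendsto (fun n => ‖βn n - β‖) Filter.atTop (nhds 0)) :
    genEigenvalue a e k β
      ≤ Filter.liminf (fun n => genEigenvalue a e k (βn n)) Filter.atTop := by
  obtain ⟨C, hC⟩ := hPoincare.exists_sq_norm_le (f := β e) hβe.ne'
  refine le_of_forall_gt_imp_ge_of_dense fun c hc => ?_
  rcases eq_or_ne c ⊤ with rfl | hc_top
  · exact le_top
  rw [← ENNReal.ofReal_toReal hc_top] at hc ⊢
  set M := c.toReal
  have hδ : Tendsto (fun n => M * C * ‖βn n - β‖) atTop (𝓝 0) := by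
    simpa using hconv.const_mul (M * C)
  have hbound : ∃ᶠ n in atTop,
      ENNReal.ofReal (M / (1 - M * C * ‖βn n - β‖)) ∈ Set.Ici (genEigenvalue a e k β) :=
    ((frequently_lt_of_liminf_lt (by isBoundedDefault) hc).and_eventually
      (hδ.eventually_lt_const one_pos)).mono fun n ⟨hlt, hsmall⟩ =>
        genEigenvalue_le_of_genEigenvalue_lt ha_symm ha_nonneg he hC hβe.ne' (hβn_symm n)
          (hβn_nonneg n) (hβne n).ne' ENNReal.toReal_nonneg hsmall hlt
  have hlim : Tendsto (fun n => ENNReal.ofReal (M / (1 - M * C * ‖βn n - β‖))) atTop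
      (𝓝 (ENNReal.ofReal M)) := by
    simpa using ENNReal.tendsto_ofReal
      (tendsto_const_nhds.div (tendsto_const_nhds.sub hδ) (by norm_num : (1 : ℝ) - 0 ≠ 0))
  exact isClosed_Ici.mem_of_frequently_of_tendsto hbound hlim

/-- Abstract fixed-metric form of Proposition 1.1, lower semicontinuity on the
finiteness set: if `‖β_n − β‖ → 0` and `limsup λ_k(β_n) < +∞`, then
`λ_k(β) ≤ liminf λ_k(β_n)`. -/
theorem stmt1 {H : Type*} [NormedAddCommGroup H] [InnerProductSpace ℝ H] [CompleteSpace H]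
    (a : H →L[ℝ] H →L[ℝ] ℝ)
    (ha_symm : ∀ φ ψ : H, a φ ψ = a ψ φ)
    (ha_nonneg : ∀ φ : H, 0 ≤ a φ φ)
    (ha_le : ∀ φ : H, a φ φ ≤ ‖φ‖ ^ 2)
    (e : H) (he : ∀ ψ : H, a e ψ = 0)
    (hPoincare : PoincareHyp a e)
    (k : ℕ) (hk : 1 ≤ k)
    (β : H →L[ℝ] H →L[ℝ] ℝ) (βn : ℕ → H →L[ℝ] H →L[ℝ] ℝ)
    (hβ_symm : ∀ φ ψ : H, β φ ψ = β ψ φ)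
    (hβ_nonneg : ∀ φ : H, 0 ≤ β φ φ)
    (hβn_symm : ∀ n, ∀ φ ψ : H, βn n φ ψ = βn n ψ φ)
    (hβn_nonneg : ∀ n, ∀ φ : H, 0 ≤ βn n φ φ)
    (hβe : 0 < β e e) (hβne : ∀ n, 0 < βn n e e)
    (hconv : Filter.Tendsto (fun n => ‖βn n - β‖) Filter.atTop (nhds 0))
    (hfin : Filter.limsup (fun n => genEigenvalue a e k (βn n)) Filter.atTop < ⊤) :
    genEigenvalue a e k β
      ≤ Filter.liminf (fun n => genEigenvalue a e k (βn n)) Filter.atTop :=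
  stmt1_general a ha_symm ha_nonneg e he hPoincare k β βn hβn_symm hβn_nonneg hβe hβne hconv
end

section
/- (Logarithmic bound on circle averages, from the proof of Claim 3.1.) Let φ : ℝ² → ℝ be continuously differentiable on a neighborhood of the closed unit disk. Then for every 0 < r ≤ 1: |f(1) − f(r)| ≤ ( ln(1/r) / (2π) )^{1/2} · ( ∫_{A_r} ‖∇φ(x)‖² dx )^{1/2}. -/
/-!
On each ray, `φ(e^{iθ}) - φ(r e^{iθ}) = ∫_r^1 ⟪∇φ(s e^{iθ}), e^{iθ}⟫ ds`; averaging over `θ`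
bounds `|f(1) - f(r)|` by `(2π)⁻¹ ∫∫ ‖∇φ(s e^{iθ})‖ ds dθ`. Splitting
`‖∇φ‖ = s^{-1/2} · s^{1/2} ‖∇φ‖`, Cauchy–Schwarz yields `(∫∫ ds dθ / s)^{1/2} = (2π log(1/r))^{1/2}`
times `(∫∫ s ‖∇φ(s e^{iθ})‖² ds dθ)^{1/2}`, which is the integral over `A_r` in polar coordinates.
-/

open MeasureTheory

/-- The average of `φ` over the circle of radius `r` centered at the origin. -/
noncomputable def circleAvg (φ : EuclideanSpace ℝ (Fin 2) → ℝ) (r : ℝ) : ℝ :=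
  (1 / (2 * Real.pi)) *
    ∫ θ in (0:ℝ)..(2 * Real.pi), φ !₂[r * Real.cos θ, r * Real.sin θ]

open Real Set
open scoped RealInnerProductSpace

local notation "ℝ²" => EuclideanSpace ℝ (Fin 2)

section RealIntegrals

variable {α : Type*} [MeasurableSpace α] {μ : Measure α}

theorem integral_mul_le_sqrt_mul_sqrt {f g : α → ℝ} (hf₀ : 0 ≤ᵐ[μ] f) (hg₀ : 0 ≤ᵐ[μ] g)
    (hf : MemLp f 2 μ) (hg : MemLp g 2 μ) :
    ∫ x, f x * g x ∂μ ≤ √(∫ x, f x ^ 2 ∂μ) * √(∫ x, g x ^ 2 ∂μ) := by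
  have h := integral_mul_le_Lp_mul_Lq_of_nonneg Real.HolderConjugate.two_two hf₀ hg₀
    (by simpa using hf) (by simpa using hg)
  simpa only [Real.rpow_two, ← Real.sqrt_eq_rpow] using h

variable [TopologicalSpace α] [OpensMeasurableSpace α] [IsFiniteMeasureOnCompacts μ]

theorem ContinuousOn.memLp_restrict_of_isCompact {f : α → ℝ} {K : Set α} (hK : IsCompact K)
    (hKm : MeasurableSet K) (hf : ContinuousOn f K) (p : ENNReal) : MemLp f p (μ.restrict K) := by
  have : IsFiniteMeasure (μ.restrict K) := isFiniteMeasure_restrict.2 hK.measure_lt_top.ne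
  obtain ⟨C, hC⟩ := hK.exists_bound_of_continuousOn hf
  exact MemLp.of_bound (hf.aestronglyMeasurable hKm) C (ae_restrict_of_forall_mem hKm hC)

end RealIntegrals

theorem ContinuousOn.integrableOn_Ioo_prod_Ioo {E : Type*} [NormedAddCommGroup E]
    {f : ℝ × ℝ → E} {a b c d : ℝ} (hf : ContinuousOn f (Icc a b ×ˢ Icc c d)) :
    IntegrableOn f (Ioo a b ×ˢ Ioo c d) :=
  (hf.integrableOn_compact (isCompact_Icc.prod isCompact_Icc)).mono_set
    (prod_mono Ioo_subset_Icc_self Ioo_subset_Icc_self)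

theorem intervalIntegral_intervalIntegral_eq_setIntegral_Ioo_prod_Ioo {E : Type*}
    [NormedAddCommGroup E] [NormedSpace ℝ E] {f : ℝ × ℝ → E} {a b c d : ℝ} (hab : a ≤ b)
    (hcd : c ≤ d) (hf : ContinuousOn f (Icc a b ×ˢ Icc c d)) :
    ∫ y in c..d, ∫ x in a..b, f (x, y) = ∫ p in Ioo a b ×ˢ Ioo c d, f p := by
  have hswap : IntegrableOn (fun q : ℝ × ℝ => f q.swap) (Ioo c d ×ˢ Ioo a b) :=
    (hf.comp continuous_swap.continuousOn fun q hq => ⟨hq.2, hq.1⟩).integrableOn_Ioo_prod_Ioo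
  simp only [intervalIntegral.integral_of_le hab, intervalIntegral.integral_of_le hcd,
    integral_Ioc_eq_integral_Ioo]
  rw [Measure.volume_eq_prod] at hswap ⊢
  exact (setIntegral_prod _ hswap).symm.trans (setIntegral_prod_swap _ _ f)

theorem setIntegral_Ioo_prod_Ioo_inv_fst {a b c d : ℝ} (ha : 0 < a) (hab : a ≤ b) (hcd : c ≤ d) :
    ∫ p in Ioo a b ×ˢ Ioo c d, p.1⁻¹ = log (b / a) * (d - c) := by
  have h := setIntegral_prod_mul (μ := volume) (ν := volume) (fun s : ℝ => s⁻¹) (fun _ => (1 : ℝ))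
    (Ioo a b) (Ioo c d)
  simp only [mul_one] at h
  rw [Measure.volume_eq_prod, h, ← integral_Ioc_eq_integral_Ioo,
    ← intervalIntegral.integral_of_le hab, integral_inv_of_pos ha (ha.trans_le hab)]
  simp [hcd]

theorem ContDiffOn.continuousOn_gradient {F : Type*} [NormedAddCommGroup F]
    [InnerProductSpace ℝ F] [CompleteSpace F] {f : F → ℝ} {U : Set F}
    (hf : ContDiffOn ℝ 1 f U) (hU : IsOpen U) : ContinuousOn (gradient f) U :=
  (InnerProductSpace.toDual ℝ F).symm.continuous.comp_continuousOn
    (hf.continuousOn_fderiv_of_isOpen hU le_rfl)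

section Polar

noncomputable def unitVec (θ : ℝ) : ℝ² := !₂[cos θ, sin θ]

noncomputable def polarPoint (p : ℝ × ℝ) : ℝ² := !₂[p.1 * cos p.2, p.1 * sin p.2]

theorem polarPoint_eq_smul (p : ℝ × ℝ) : polarPoint p = p.1 • unitVec p.2 := by
  ext i
  fin_cases i <;> simp [polarPoint, unitVec]

theorem norm_unitVec (θ : ℝ) : ‖unitVec θ‖ = 1 := by
  simp [EuclideanSpace.norm_eq, unitVec, Fin.sum_univ_two]

theorem norm_polarPoint (p : ℝ × ℝ) : ‖polarPoint p‖ = |p.1| := by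
  rw [polarPoint_eq_smul, norm_smul, norm_unitVec, mul_one, Real.norm_eq_abs]

theorem continuous_unitVec : Continuous unitVec :=
  (PiLp.continuous_toLp 2 _).comp (continuous_pi fun i => by fin_cases i <;> simp <;> fun_prop)

theorem continuous_polarPoint : Continuous polarPoint := by
  simp only [funext polarPoint_eq_smul]
  exact continuous_fst.smul (continuous_unitVec.comp continuous_snd)

theorem hasDerivAt_polarPoint_fst (s θ : ℝ) :
    HasDerivAt (fun t => polarPoint (t, θ)) (unitVec θ) s := by
  simp only [polarPoint_eq_smul]
  simpa using (hasDerivAt_id s).smul_const (unitVec θ)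

theorem mapsTo_polarPoint_Icc_prod {a b : ℝ} (ha : 0 ≤ a) (t : Set ℝ) :
    MapsTo polarPoint (Icc a b ×ˢ t) (Metric.closedBall 0 b) := fun p hp => by
  rw [mem_closedBall_zero_iff, norm_polarPoint]
  exact abs_le.2 ⟨by linarith [hp.1.1, hp.1.2], hp.1.2⟩

noncomputable def euclideanToProd : ℝ² ≃ᵐ ℝ × ℝ :=
  (MeasurableEquiv.toLp 2 (Fin 2 → ℝ)).symm.trans MeasurableEquiv.finTwoArrow

theorem measurePreserving_euclideanToProd : MeasurePreserving euclideanToProd :=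
  (volume_preserving_finTwoArrow ℝ).comp
    (EuclideanSpace.volume_preserving_symm_measurableEquiv_toLp (Fin 2))

theorem euclideanToProd_symm_polarCoord_symm (p : ℝ × ℝ) :
    euclideanToProd.symm (polarCoord.symm p) = polarPoint p := by
  ext i
  fin_cases i <;> rfl

theorem integral_comp_polarPoint (f : ℝ² → ℝ) :
    ∫ p in polarCoord.target, p.1 * f (polarPoint p) = ∫ x, f x := by
  rw [← measurePreserving_euclideanToProd.symm.integral_comp
    euclideanToProd.symm.measurableEmbedding, ← integral_comp_polarCoord_symm]
  simp only [euclideanToProd_symm_polarCoord_symm, smul_eq_mul]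

theorem setIntegral_annulus_eq {a b : ℝ} (ha : 0 ≤ a) (f : ℝ² → ℝ) :
    ∫ x in {x : ℝ² | a < ‖x‖ ∧ ‖x‖ < b}, f x
      = ∫ p in Ioo a b ×ˢ Ioo (-π) π, p.1 * f (polarPoint p) := by
  have hA : MeasurableSet {x : ℝ² | a < ‖x‖ ∧ ‖x‖ < b} :=
    measurableSet_lt measurable_const measurable_norm |>.inter
      (measurableSet_lt measurable_norm measurable_const)
  have hS : polarCoord.target ∩ polarPoint ⁻¹' {x | a < ‖x‖ ∧ ‖x‖ < b}
      = Ioo a b ×ˢ Ioo (-π) π := by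
    ext ⟨s, θ⟩
    simp only [polarCoord_target, mem_inter_iff, mem_prod, mem_preimage, mem_ofPred_eq,
      norm_polarPoint, mem_Ioi, mem_Ioo]
    constructor
    · rintro ⟨⟨hs, hθ⟩, h⟩
      rw [abs_of_pos hs] at h
      exact ⟨h, hθ⟩
    · rintro ⟨h, hθ⟩
      have hs : 0 < s := ha.trans_lt h.1
      rw [abs_of_pos hs]
      exact ⟨⟨hs, hθ⟩, h⟩
  have hind : ∀ p : ℝ × ℝ, p.1 * {x : ℝ² | a < ‖x‖ ∧ ‖x‖ < b}.indicator f (polarPoint p)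
      = (polarPoint ⁻¹' {x | a < ‖x‖ ∧ ‖x‖ < b}).indicator (fun p => p.1 * f (polarPoint p)) p :=
    fun p => by rw [indicator_mul_right, ← indicator_comp_right]; rfl
  rw [← integral_indicator hA, ← integral_comp_polarPoint, ← hS,
    ← setIntegral_indicator (continuous_polarPoint.measurable hA)]
  simp only [hind]

end Polar

theorem hasDerivAt_comp_polarPoint_fst {φ : ℝ² → ℝ} {s θ : ℝ}
    (hφ : DifferentiableAt ℝ φ (polarPoint (s, θ))) :
    HasDerivAt (fun t => φ (polarPoint (t, θ)))
      ⟪gradient φ (polarPoint (s, θ)), unitVec θ⟫ s := by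
  have h := hφ.hasGradientAt.hasFDerivAt.comp_hasDerivAt s (hasDerivAt_polarPoint_fst s θ)
  rwa [InnerProductSpace.toDual_apply_apply] at h

theorem circleAvg_eq_integral_neg_pi_pi (φ : ℝ² → ℝ) (r : ℝ) :
    circleAvg φ r = 1 / (2 * π) * ∫ θ in -π..π, φ (polarPoint (r, θ)) := by
  have hper : Function.Periodic (fun θ => φ (polarPoint (r, θ))) (2 * π) := fun θ => by
    simp [polarPoint]
  have h := hper.intervalIntegral_add_eq 0 (-π)
  rw [zero_add, show -π + 2 * π = π by ring] at h
  rw [← h]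
  rfl

section Annulus

variable {φ : ℝ² → ℝ} {U : Set ℝ²} {a b : ℝ}

theorem continuousOn_gradient_comp_polarPoint (hU : IsOpen U) (hφ : ContDiffOn ℝ 1 φ U)
    (hbU : Metric.closedBall 0 b ⊆ U) (ha : 0 ≤ a) :
    ContinuousOn (fun p => gradient φ (polarPoint p)) (Icc a b ×ˢ univ) :=
  (hφ.continuousOn_gradient hU).comp continuous_polarPoint.continuousOn
    ((mapsTo_polarPoint_Icc_prod ha univ).mono_right hbU)

theorem circleAvg_sub_circleAvg_eq (hU : IsOpen U) (hφ : ContDiffOn ℝ 1 φ U)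
    (hbU : Metric.closedBall 0 b ⊆ U) (ha : 0 ≤ a) (hab : a ≤ b) :
    circleAvg φ b - circleAvg φ a
      = 1 / (2 * π) * ∫ p in Ioo a b ×ˢ Ioo (-π) π, ⟪gradient φ (polarPoint p), unitVec p.2⟫ := by
  have hmaps := (mapsTo_polarPoint_Icc_prod ha univ).mono_right hbU
  have hcont : ∀ s ∈ Icc a b, Continuous fun θ => φ (polarPoint (s, θ)) := fun s hs =>
    hφ.continuousOn.comp_continuous (continuous_polarPoint.comp (.prodMk_right s))
      fun θ => hmaps ⟨hs, trivial⟩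
  have hD : ContinuousOn (fun p : ℝ × ℝ => ⟪gradient φ (polarPoint p), unitVec p.2⟫)
      (Icc a b ×ˢ univ) :=
    (continuousOn_gradient_comp_polarPoint hU hφ hbU ha).inner
      (continuous_unitVec.comp continuous_snd).continuousOn
  have hftc : ∀ θ, φ (polarPoint (b, θ)) - φ (polarPoint (a, θ))
      = ∫ s in a..b, ⟪gradient φ (polarPoint (s, θ)), unitVec θ⟫ := fun θ => by
    refine (intervalIntegral.integral_eq_sub_of_hasDerivAt (f := fun t => φ (polarPoint (t, θ)))
      (fun s hs => ?_) ?_).symm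
    · rw [uIcc_of_le hab] at hs
      exact hasDerivAt_comp_polarPoint_fst <| (hφ.differentiableOn one_ne_zero).differentiableAt
        (hU.mem_nhds (hmaps ⟨hs, trivial⟩))
    · refine ContinuousOn.intervalIntegrable ?_
      rw [uIcc_of_le hab]
      exact hD.comp (Continuous.prodMk_left θ).continuousOn fun s hs => ⟨hs, trivial⟩
  rw [circleAvg_eq_integral_neg_pi_pi, circleAvg_eq_integral_neg_pi_pi, ← mul_sub,
    ← intervalIntegral.integral_sub ((hcont b ⟨hab, le_rfl⟩).intervalIntegrable _ _)
      ((hcont a ⟨le_rfl, hab⟩).intervalIntegrable _ _),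
    ← intervalIntegral_intervalIntegral_eq_setIntegral_Ioo_prod_Ioo hab
      (by linarith [pi_pos]) (hD.mono (prod_mono_right (subset_univ _)))]
  simp only [hftc]

theorem abs_circleAvg_sub_circleAvg_le (hU : IsOpen U) (hφ : ContDiffOn ℝ 1 φ U)
    (hbU : Metric.closedBall 0 b ⊆ U) (ha : 0 ≤ a) (hab : a ≤ b) :
    |circleAvg φ b - circleAvg φ a|
      ≤ 1 / (2 * π) * ∫ p in Ioo a b ×ˢ Ioo (-π) π, ‖gradient φ (polarPoint p)‖ := by
  rw [circleAvg_sub_circleAvg_eq hU hφ hbU ha hab, abs_mul, abs_of_pos (by positivity),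
    ← Real.norm_eq_abs]
  gcongr
  refine norm_integral_le_of_norm_le ?_ (ae_of_all _ fun p => ?_)
  · exact ((continuousOn_gradient_comp_polarPoint hU hφ hbU ha).mono
      (prod_mono_right (subset_univ _))).norm.integrableOn_Ioo_prod_Ioo
  · simpa [norm_unitVec] using abs_real_inner_le_norm (gradient φ (polarPoint p)) (unitVec p.2)

theorem setIntegral_norm_gradient_comp_polarPoint_le (hU : IsOpen U) (hφ : ContDiffOn ℝ 1 φ U)
    (hbU : Metric.closedBall 0 b ⊆ U) (ha : 0 < a) (hab : a ≤ b) :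
    ∫ p in Ioo a b ×ˢ Ioo (-π) π, ‖gradient φ (polarPoint p)‖
      ≤ √(log (b / a) * (2 * π)) *
          √(∫ x in {x : ℝ² | a < ‖x‖ ∧ ‖x‖ < b}, ‖gradient φ x‖ ^ 2) := by
  set S := Ioo a b ×ˢ Ioo (-π) π
  set K := Icc a b ×ˢ Icc (-π) π
  have hS : MeasurableSet S := measurableSet_Ioo.prod measurableSet_Ioo
  have hK : IsCompact K := isCompact_Icc.prod isCompact_Icc
  have hSK : volume.restrict S ≤ volume.restrict K :=
    Measure.restrict_mono (prod_mono Ioo_subset_Icc_self Ioo_subset_Icc_self) le_rfl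
  have hpos : ∀ p ∈ K, 0 < p.1 := fun p hp => ha.trans_le hp.1.1
  have hsqrt : ContinuousOn (fun p : ℝ × ℝ => √p.1) K :=
    (continuous_sqrt.comp continuous_fst).continuousOn
  have hG : ContinuousOn (fun p => ‖gradient φ (polarPoint p)‖) K :=
    ((continuousOn_gradient_comp_polarPoint hU hφ hbU ha.le).mono
      (prod_mono_right (subset_univ _))).norm
  have hcs := integral_mul_le_sqrt_mul_sqrt (μ := volume.restrict S)
    (f := fun p => (√p.1)⁻¹) (g := fun p => √p.1 * ‖gradient φ (polarPoint p)‖)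
    (ae_of_all _ fun p => by positivity) (ae_of_all _ fun p => by positivity)
    (((hsqrt.inv₀ fun p hp => (sqrt_pos.2 (hpos p hp)).ne').memLp_restrict_of_isCompact hK
      hK.measurableSet 2).mono_measure hSK)
    (((hsqrt.mul hG).memLp_restrict_of_isCompact hK hK.measurableSet 2).mono_measure hSK)
  have hposS : ∀ p ∈ S, 0 < p.1 := fun p hp => ha.trans hp.1.1
  have h1 : ∫ p in S, (√p.1)⁻¹ * (√p.1 * ‖gradient φ (polarPoint p)‖)
      = ∫ p in S, ‖gradient φ (polarPoint p)‖ :=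
    setIntegral_congr_fun hS fun p hp => by
      rw [← mul_assoc, inv_mul_cancel₀ (sqrt_pos.2 (hposS p hp)).ne', one_mul]
  have h2 : ∫ p in S, ((√p.1)⁻¹) ^ 2 = log (b / a) * (2 * π) := by
    rw [← show π - -π = 2 * π by ring,
      ← setIntegral_Ioo_prod_Ioo_inv_fst ha hab (by linarith [pi_pos])]
    exact setIntegral_congr_fun hS fun p hp => by rw [inv_pow, sq_sqrt (hposS p hp).le]
  have h3 : ∫ p in S, (√p.1 * ‖gradient φ (polarPoint p)‖) ^ 2
      = ∫ x in {x : ℝ² | a < ‖x‖ ∧ ‖x‖ < b}, ‖gradient φ x‖ ^ 2 := by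
    rw [setIntegral_annulus_eq ha.le]
    exact setIntegral_congr_fun hS fun p hp => by rw [mul_pow, sq_sqrt (hposS p hp).le]
  rwa [h1, h2, h3] at hcs

end Annulus

/-- Logarithmic bound on circle averages, from the proof of Claim 3.1: for `φ`
continuously differentiable on a neighborhood of the closed unit disk and `0 < r ≤ 1`,
`|f(1) − f(r)| ≤ (ln(1/r)/(2π))^{1/2} (∫_{A_r} ‖∇φ‖²)^{1/2}`. -/
theorem stmt6 (φ : EuclideanSpace ℝ (Fin 2) → ℝ) (U : Set (EuclideanSpace ℝ (Fin 2)))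
    (hU : IsOpen U) (hUball : Metric.closedBall 0 1 ⊆ U)
    (hφ : ContDiffOn ℝ 1 φ U)
    (r : ℝ) (hr0 : 0 < r) (hr1 : r ≤ 1) :
    |circleAvg φ 1 - circleAvg φ r|
      ≤ Real.sqrt (Real.log (1 / r) / (2 * Real.pi)) *
          Real.sqrt (∫ x in {x : EuclideanSpace ℝ (Fin 2) | r < ‖x‖ ∧ ‖x‖ < 1},
            ‖gradient φ x‖ ^ 2) := by
  calc |circleAvg φ 1 - circleAvg φ r|
      ≤ 1 / (2 * π) * ∫ p in Ioo r 1 ×ˢ Ioo (-π) π, ‖gradient φ (polarPoint p)‖ :=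
        abs_circleAvg_sub_circleAvg_le hU hφ hUball hr0.le hr1
    _ ≤ 1 / (2 * π) * (√(log (1 / r) * (2 * π)) *
          √(∫ x in {x : ℝ² | r < ‖x‖ ∧ ‖x‖ < 1}, ‖gradient φ x‖ ^ 2)) := by
        gcongr
        exact setIntegral_norm_gradient_comp_polarPoint_le hU hφ hUball hr0 hr1
    _ = √(log (1 / r) / (2 * π)) *
          √(∫ x in {x : ℝ² | r < ‖x‖ ∧ ‖x‖ < 1}, ‖gradient φ x‖ ^ 2) := by
        rw [sqrt_mul' _ (by positivity), sqrt_div' _ (by positivity)]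
        field_simp
        rw [sq_sqrt (by positivity)]
        ring
end

section
/- (Per-mode case of Lemma 3.1, Karpukhin–Kusner–McGrath–Stern extension estimate.) For every integer k ≥ 1, every real l > 0 and all reals a, b: (1 − 4 e^{−l}) ∫_{|z|<1} ‖∇u(z)‖² dz ≤ ∫₀^{l/2} ∫₀^{2π} ‖∇ψ(θ,s)‖² dθ ds, where u(z) = a·Re(z^k) + b·Im(z^k) and ψ(θ,s) = ( e^{ks}/(1+e^{kl}) + e^{−ks}/(1+e^{−kl}) ) (a cos(kθ) + b sin(kθ)). -/
/-!
Both energies can be computed exactly. With `c = a - b i` we have `u = Re (c z^k)`, whose gradient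
has length `k |c| |z|^(k-1)`, so the disk energy is `π k |c|²`. On the cylinder the variables
separate, `ψ = φ(s) f(θ)`, and integrating in `θ` leaves `π |c|² ∫ (k² φ² + φ'²) ds`, which is
`π k |c|² tanh (k l / 2)`. It remains to note `tanh (k l / 2) ≥ 1 - 2 e^{-l} ≥ 1 - 4 e^{-l}`.
-/

open MeasureTheory Real ComplexConjugate

theorem norm_fderiv_re_of_hasDerivAt {f : ℂ → ℂ} {f' z : ℂ} (hf : HasDerivAt f f' z) :
    ‖fderiv ℝ (fun w => (f w).re) z‖ = ‖f'‖ := by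
  have hre := Complex.reCLM.hasFDerivAt.comp z (hf.hasFDerivAt.restrictScalars ℝ)
  have hinner : Complex.reCLM.comp ((ContinuousLinearMap.toSpanSingleton ℂ f').restrictScalars ℝ)
      = innerSL ℝ (conj f') := by
    ext h
    simp [Complex.inner]
  rw [show (fun w => (f w).re) = Complex.reCLM ∘ f from rfl, hre.fderiv, hinner,
    innerSL_apply_norm, Complex.norm_conj]

theorem integral_ball_norm_pow (n : ℕ) :
    ∫ z in Metric.ball (0 : ℂ) 1, ‖z‖ ^ n = 2 * π / (n + 2) := by
  have hball : ∀ z : ℂ, (Metric.ball (0 : ℂ) 1).indicator (‖·‖ ^ n) z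
      = (Set.Iio 1).indicator (· ^ n) ‖z‖ := by
    intro z
    by_cases h : ‖z‖ < 1 <;> simp [h]
  have hradial : ∀ r : ℝ, r ^ (2 - 1) • (Set.Iio 1).indicator (· ^ n) r
      = (Set.Iio 1).indicator (· ^ (n + 1)) r := by
    intro r
    by_cases h : r < 1 <;> simp [h, pow_succ']
  rw [← integral_indicator measurableSet_ball, funext hball, integral_fun_norm_addHaar volume,
    Complex.finrank_real_complex, funext hradial, setIntegral_indicator measurableSet_Iio,
    Set.Ioi_inter_Iio, ← integral_Ioc_eq_integral_Ioo,
    ← intervalIntegral.integral_of_le zero_le_one, integral_pow, measureReal_def,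
    Complex.volume_ball, ENNReal.ofReal_one, one_pow, one_mul, ENNReal.coe_toReal,
    NNReal.coe_real_pi, one_pow, zero_pow (by omega), sub_zero, nsmul_eq_mul, smul_eq_mul]
  push_cast
  field_simp
  ring

theorem integral_ball_sq_norm_fderiv_re_mul_pow (c : ℂ) (k : ℕ) :
    ∫ z in Metric.ball (0 : ℂ) 1, ‖fderiv ℝ (fun z => (c * z ^ k).re) z‖ ^ 2 = π * k * ‖c‖ ^ 2 := by
  have hpt : ∀ z : ℂ, ‖fderiv ℝ (fun z => (c * z ^ k).re) z‖ ^ 2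
      = (k * ‖c‖) ^ 2 * ‖z‖ ^ (2 * (k - 1)) := by
    intro z
    rw [norm_fderiv_re_of_hasDerivAt ((hasDerivAt_pow k z).const_mul c)]
    simp only [norm_mul, norm_pow, Complex.norm_natCast, pow_mul]
    ring
  simp_rw [hpt]
  rw [integral_const_mul, integral_ball_norm_pow]
  rcases k with _ | j
  · simp
  · push_cast
    field_simp

theorem integral_cos_nat_mul (n : ℕ) (hn : n ≠ 0) : ∫ θ in (0)..(2 * π), cos (n * θ) = 0 := by
  rw [intervalIntegral.integral_comp_mul_left cos (Nat.cast_ne_zero.2 hn), integral_cos,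
    show (n : ℝ) * (2 * π) = (2 * n : ℕ) * π by push_cast; ring, sin_nat_mul_pi]
  simp

theorem integral_sin_nat_mul (n : ℕ) (hn : n ≠ 0) : ∫ θ in (0)..(2 * π), sin (n * θ) = 0 := by
  rw [intervalIntegral.integral_comp_mul_left sin (Nat.cast_ne_zero.2 hn), integral_sin]
  simp [cos_nat_mul_two_pi]

theorem integral_sq_cos_add_sin (A B : ℝ) (n : ℕ) (hn : n ≠ 0) :
    ∫ θ in (0)..(2 * π), (A * cos (n * θ) + B * sin (n * θ)) ^ 2 = π * (A ^ 2 + B ^ 2) := by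
  have hdouble : ∀ θ : ℝ, (A * cos (n * θ) + B * sin (n * θ)) ^ 2
      = (A ^ 2 + B ^ 2) / 2 + ((A ^ 2 - B ^ 2) / 2 * cos ((2 * n : ℕ) * θ)
        + A * B * sin ((2 * n : ℕ) * θ)) := by
    intro θ
    rw [show ((2 * n : ℕ) : ℝ) * θ = 2 * (n * θ) by push_cast; ring, cos_two_mul, sin_two_mul]
    linear_combination B ^ 2 * sin_sq_add_cos_sq (n * θ)
  have hcos : IntervalIntegrable (fun θ => (A ^ 2 - B ^ 2) / 2 * cos ((2 * n : ℕ) * θ))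
      volume 0 (2 * π) := (by fun_prop : Continuous _).intervalIntegrable _ _
  have hsin : IntervalIntegrable (fun θ => A * B * sin ((2 * n : ℕ) * θ))
      volume 0 (2 * π) := (by fun_prop : Continuous _).intervalIntegrable _ _
  have h2n : 2 * n ≠ 0 := by omega
  simp only [hdouble]
  rw [intervalIntegral.integral_add intervalIntegrable_const (hcos.add hsin),
    intervalIntegral.integral_add hcos hsin, intervalIntegral.integral_const_mul,
    intervalIntegral.integral_const_mul, integral_cos_nat_mul _ h2n, integral_sin_nat_mul _ h2n, intervalIntegral.integral_const, smul_eq_mul]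
  ring

theorem hasDerivAt_cos_add_sin (a b κ θ : ℝ) :
    HasDerivAt (fun θ => a * cos (κ * θ) + b * sin (κ * θ))
      (κ * b * cos (κ * θ) + -(κ * a) * sin (κ * θ)) θ := by
  have hlin : HasDerivAt (fun θ => κ * θ) κ θ := by simpa using (hasDerivAt_id θ).const_mul κ
  exact ((((hasDerivAt_cos _).comp θ hlin).const_mul a).add
    (((hasDerivAt_sin _).comp θ hlin).const_mul b)).congr_deriv (by ring)

/-- The solution of `φ'' = κ² φ` with `φ' (l / 2) = 0` and `φ 0 = 1`. -/
noncomputable def neumannProfile (κ l s : ℝ) : ℝ :=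
  exp (κ * s) / (1 + exp (κ * l)) + exp (-(κ * s)) / (1 + exp (-(κ * l)))

theorem hasDerivAt_neumannProfile (κ l s : ℝ) :
    HasDerivAt (neumannProfile κ l)
      (κ * (exp (κ * s) / (1 + exp (κ * l)) - exp (-(κ * s)) / (1 + exp (-(κ * l))))) s := by
  have hlin : HasDerivAt (fun s => κ * s) κ s := by simpa using (hasDerivAt_id s).const_mul κ
  have hlin' : HasDerivAt (fun s => -(κ * s)) (-κ) s := hlin.neg
  have hpos := ((hasDerivAt_exp _).comp s hlin).div_const (1 + exp (κ * l))
  have hneg := ((hasDerivAt_exp _).comp s hlin').div_const (1 + exp (-(κ * l)))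
  exact (hpos.add hneg).congr_deriv (by ring)

theorem sq_mul_neumannProfile_add_sq_deriv (κ l s : ℝ) :
    (κ * neumannProfile κ l s) ^ 2 + deriv (neumannProfile κ l) s ^ 2
      = 2 * κ ^ 2 * (exp (2 * κ * s) / (1 + exp (κ * l)) ^ 2
        + exp (-(2 * κ) * s) / (1 + exp (-(κ * l))) ^ 2) := by
  rw [(hasDerivAt_neumannProfile κ l s).deriv, neumannProfile,
    show 2 * κ * s = κ * s + κ * s by ring, show -(2 * κ) * s = -(κ * s) + -(κ * s) by ring,
    exp_add, exp_add]
  field_simp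
  ring

theorem integral_exp_mul_zero_half (c l : ℝ) (hc : c ≠ 0) :
    ∫ s in (0)..(l / 2), exp (c * s) = (exp (c * l / 2) - 1) / c := by
  rw [intervalIntegral.integral_comp_mul_left exp hc, integral_exp, mul_zero, exp_zero,
    smul_eq_mul, mul_div_assoc]
  field_simp

theorem integral_energy_neumannProfile (κ l : ℝ) (hκ : κ ≠ 0) :
    ∫ s in (0)..(l / 2), ((κ * neumannProfile κ l s) ^ 2 + deriv (neumannProfile κ l) s ^ 2)
      = κ * ((exp (κ * l) - 1) / (exp (κ * l) + 1)) := by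
  simp only [sq_mul_neumannProfile_add_sq_deriv]
  have hint : ∀ c : ℝ, IntervalIntegrable (fun s => exp (c * s)) volume 0 (l / 2) :=
    fun c => (by fun_prop : Continuous _).intervalIntegrable _ _
  rw [intervalIntegral.integral_const_mul, intervalIntegral.integral_add
      ((hint _).div_const _) ((hint _).div_const _),
    intervalIntegral.integral_div, intervalIntegral.integral_div,
    integral_exp_mul_zero_half _ _ (by positivity),
    integral_exp_mul_zero_half _ _ (by simpa using hκ),
    show 2 * κ * l / 2 = κ * l by ring, show -(2 * κ) * l / 2 = -(κ * l) by ring, exp_neg]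
  have := exp_pos (κ * l)
  field_simp
  ring

theorem integral_cylinder_energy (k : ℕ) (hk : k ≠ 0) (l a b : ℝ) :
    ∫ s in (0)..(l / 2), ∫ θ in (0)..(2 * π),
        ((deriv (fun θ' => neumannProfile k l s * (a * cos (k * θ') + b * sin (k * θ'))) θ) ^ 2
          + (deriv (fun s' => neumannProfile k l s' * (a * cos (k * θ) + b * sin (k * θ))) s) ^ 2)
      = π * (a ^ 2 + b ^ 2) * (k * ((exp (k * l) - 1) / (exp (k * l) + 1))) := by
  have hprofile : ∀ s, DifferentiableAt ℝ (neumannProfile k l) s :=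
    fun s => (hasDerivAt_neumannProfile _ _ s).differentiableAt
  have hinner : ∀ s, ∫ θ in (0)..(2 * π),
        ((deriv (fun θ' => neumannProfile k l s * (a * cos (k * θ') + b * sin (k * θ'))) θ) ^ 2
          + (deriv (fun s' => neumannProfile k l s' * (a * cos (k * θ) + b * sin (k * θ))) s) ^ 2)
      = π * (a ^ 2 + b ^ 2) * ((k * neumannProfile k l s) ^ 2 + deriv (neumannProfile k l) s ^ 2) := by
    intro s
    simp only [((hasDerivAt_cos_add_sin a b k _).const_mul _).deriv, deriv_mul_const (hprofile s),
      mul_pow (neumannProfile k l s), mul_pow (deriv (neumannProfile k l) s)]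
    rw [intervalIntegral.integral_add ((by fun_prop : Continuous _).intervalIntegrable _ _)
        ((by fun_prop : Continuous _).intervalIntegrable _ _),
      intervalIntegral.integral_const_mul, intervalIntegral.integral_const_mul,
      integral_sq_cos_add_sin _ _ k hk, integral_sq_cos_add_sin _ _ k hk]
    ring
  simp only [hinner]
  rw [intervalIntegral.integral_const_mul, integral_energy_neumannProfile _ _ (by exact_mod_cast hk)]

theorem one_sub_four_mul_exp_neg_le {κ : ℝ} (hκ : 1 ≤ κ) (l : ℝ) :
    1 - 4 * exp (-l) ≤ (exp (κ * l) - 1) / (exp (κ * l) + 1) := by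
  have hexp : exp l ≤ exp (κ * l) + 1 := by
    rcases le_total 0 l with hl | hl
    · linarith [exp_le_exp.2 (le_mul_of_one_le_left hl hκ), exp_pos (κ * l)]
    · linarith [exp_le_one_iff.2 hl, exp_pos (κ * l)]
  have hinv : exp (-l) * exp l = 1 := by rw [← exp_add, neg_add_cancel, exp_zero]
  rw [le_div_iff₀ (by positivity)]
  nlinarith [mul_le_mul_of_nonneg_left hexp (exp_pos (-l)).le]

theorem stmt11_general (k : ℕ) (hk : 1 ≤ k) (l : ℝ) (a b : ℝ)
    (u : ℂ → ℝ)
    (hu : ∀ z : ℂ, u z = a * (z ^ k).re + b * (z ^ k).im)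
    (ψ : ℝ → ℝ → ℝ)
    (hψ : ∀ θ s : ℝ, ψ θ s =
      (Real.exp (k * s) / (1 + Real.exp (k * l))
        + Real.exp (-(k * s)) / (1 + Real.exp (-(k * l))))
      * (a * Real.cos (k * θ) + b * Real.sin (k * θ))) :
    (1 - 4 * Real.exp (-l)) * ∫ z in Metric.ball (0:ℂ) 1, ‖fderiv ℝ u z‖ ^ 2
      ≤ ∫ s in (0:ℝ)..(l / 2), ∫ θ in (0:ℝ)..(2 * Real.pi),
          ((deriv (fun θ' => ψ θ' s) θ) ^ 2 + (deriv (fun s' => ψ θ s') s) ^ 2) := by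
  obtain rfl : u = fun z => ((a - b * Complex.I) * z ^ k).re := by
    funext z
    simp [hu]
  obtain rfl : ψ = fun θ s => neumannProfile k l s * (a * cos (k * θ) + b * sin (k * θ)) :=
    funext₂ hψ
  have hnorm : ‖(a : ℂ) - b * Complex.I‖ ^ 2 = a ^ 2 + b ^ 2 := by
    rw [sub_eq_add_neg, ← neg_mul, ← Complex.ofReal_neg, Complex.sq_norm,
      Complex.normSq_add_mul_I, neg_sq]
  rw [integral_ball_sq_norm_fderiv_re_mul_pow, integral_cylinder_energy k (by omega), hnorm]
  calc (1 - 4 * exp (-l)) * (π * k * (a ^ 2 + b ^ 2))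
      = π * (a ^ 2 + b ^ 2) * k * (1 - 4 * exp (-l)) := by ring
    _ ≤ π * (a ^ 2 + b ^ 2) * k * ((exp (k * l) - 1) / (exp (k * l) + 1)) := by
      gcongr
      exact one_sub_four_mul_exp_neg_le (by exact_mod_cast hk) l
    _ = _ := by ring

/-- Per-mode case of Lemma 3.1 (Karpukhin–Kusner–McGrath–Stern extension estimate):
`(1 − 4e^{−l}) ∫_{|z|<1} ‖∇u‖² ≤ ∫₀^{l/2} ∫₀^{2π} ‖∇ψ‖² dθ ds`, where `u` is the harmonic
extension of `a cos kθ + b sin kθ` to the unit disk and `ψ` its harmonic extension to the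
cylinder of length `l/2` with Neumann condition at the far end. -/
theorem stmt11 (k : ℕ) (hk : 1 ≤ k) (l : ℝ) (hl : 0 < l) (a b : ℝ)
    (u : ℂ → ℝ)
    (hu : ∀ z : ℂ, u z = a * (z ^ k).re + b * (z ^ k).im)
    (ψ : ℝ → ℝ → ℝ)
    (hψ : ∀ θ s : ℝ, ψ θ s =
      (Real.exp (k * s) / (1 + Real.exp (k * l))
        + Real.exp (-(k * s)) / (1 + Real.exp (-(k * l))))
      * (a * Real.cos (k * θ) + b * Real.sin (k * θ))) :
    (1 - 4 * Real.exp (-l)) * ∫ z in Metric.ball (0:ℂ) 1, ‖fderiv ℝ u z‖ ^ 2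
      ≤ ∫ s in (0:ℝ)..(l / 2), ∫ θ in (0:ℝ)..(2 * Real.pi),
          ((deriv (fun θ' => ψ θ' s) θ) ^ 2 + (deriv (fun s' => ψ θ s') s) ^ 2) :=
  stmt11_general k hk l a b u hu ψ hψ
end

section
/- (L² lower bound for harmonic Fourier modes of frequency n ≥ 2 on an annulus, from Step 2 of the proof of Proposition 3.2.) There exists ε₀ ∈ (0, 1/2] such that for every integer n ≥ 2, every ε ∈ (0, ε₀], and all reals c, d: ∫_ε^1 (c rⁿ + d r^{−n})² r dr ≥ (1/4) ( c²/(2n+2) + d² ε^{2−2n}/(2n−2) ). -/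
/-!
Expanding the square, the integral is
`c²(1 - ε^(2n+2))/(2n+2) + cd(1 - ε²) + d²(ε^(2-2n) - 1)/(2n-2)`.
With `A = c²/(2n+2)` and `B = d²ε^(2-2n)/(2n-2)`, AM-GM gives `|cd| ≤ (A + B)/2` as soon as
`ε^(2-2n) ≥ (2n+2)(2n-2)`, which holds for `ε ≤ 1/4` since `16^(n-1) ≥ 4n²`. The boundary terms
`ε^(2n+2) A` and `d²/(2n-2) = ε^(2n-2) B` are at most `A/4` and `B/4`, which leaves `(A + B)/4`.
-/

open MeasureTheory

theorem mode_sq_mul_self_eq {r : ℝ} (hr : r ≠ 0) (n : ℕ) (c d : ℝ) :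
    (c * r ^ n + d * r ^ (-(n:ℤ))) ^ 2 * r
      = c ^ 2 * r ^ (2 * (n:ℤ) + 1) + 2 * c * d * r ^ (1:ℤ) + d ^ 2 * r ^ (1 - 2 * (n:ℤ)) := by
  have h₁ : r ^ (2 * (n:ℤ) + 1) = r ^ n * r ^ n * r := by
    rw [zpow_add₀ hr, two_mul, zpow_add₀ hr, zpow_natCast, zpow_one]
  have h₂ : r ^ (1 - 2 * (n:ℤ)) = r ^ (-(n:ℤ)) * r ^ (-(n:ℤ)) * r := by
    rw [← zpow_add₀ hr, ← zpow_add_one₀ hr]; ring_nf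
  have h₃ : r ^ n * r ^ (-(n:ℤ)) = 1 := by
    rw [zpow_neg, zpow_natCast, mul_inv_cancel₀ (pow_ne_zero n hr)]
  rw [h₁, h₂, zpow_one]
  linear_combination (2 * c * d * r) * h₃

theorem integral_mode_sq_mul_self {n : ℕ} (hn : n ≠ 1) {ε : ℝ} (hε : 0 < ε) (c d : ℝ) :
    ∫ r in ε..1, (c * r ^ n + d * r ^ (-(n:ℤ))) ^ 2 * r
      = c ^ 2 * (1 - ε ^ (2 * n + 2)) / (2 * n + 2) + c * d * (1 - ε ^ 2)
        + d ^ 2 * (ε ^ ((2:ℤ) - 2 * n) - 1) / (2 * n - 2) := by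
  have h0 : (0:ℝ) ∉ Set.uIcc ε 1 := Set.notMem_uIcc_of_lt hε one_pos
  have hint (m : ℤ) (k : ℝ) : IntervalIntegrable (fun r : ℝ => k * r ^ m) volume ε 1 :=
    (intervalIntegral.intervalIntegrable_zpow (Or.inr h0)).const_mul k
  have hm (m : ℤ) (hm : m ≠ -1) : ∫ r in ε..1, r ^ m = (1 - ε ^ (m + 1)) / (m + 1) := by
    rw [integral_zpow (Or.inr ⟨hm, h0⟩), one_zpow]
  rw [intervalIntegral.integral_congr fun r hr =>
      mode_sq_mul_self_eq (ne_of_mem_of_not_mem hr h0) n c d,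
    intervalIntegral.integral_add ((hint _ _).add (hint _ _)) (hint _ _),
    intervalIntegral.integral_add (hint _ _) (hint _ _),
    intervalIntegral.integral_const_mul, intervalIntegral.integral_const_mul,
    intervalIntegral.integral_const_mul, hm _ (by omega), hm _ (by omega), hm _ (by omega),
    show (1 : ℤ) - 2 * n + 1 = 2 - 2 * n by ring,
    show (2 : ℤ) * n + 1 + 1 = ((2 * n + 2 : ℕ) : ℤ) by push_cast; ring, zpow_natCast,
    show (1 : ℤ) + 1 = ((2 : ℕ) : ℤ) by norm_num, zpow_natCast]
  push_cast
  rw [show (1 - 2 * n + 1 : ℝ) = -(2 * n - 2) by ring, div_neg, ← neg_div, neg_sub]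
  ring

theorem abs_mul_le_half_add {a b E : ℝ} (ha : 0 < a) (hb : 0 < b) (hab : a * b ≤ E) (c d : ℝ) :
    |c * d| ≤ (c ^ 2 / a + d ^ 2 * E / b) / 2 := by
  have hE : d ^ 2 * a ≤ d ^ 2 * E / b := by
    rw [le_div_iff₀ hb, mul_assoc]; exact mul_le_mul_of_nonneg_left hab (sq_nonneg d)
  have amgm : 2 * |c * d| ≤ c ^ 2 / a + d ^ 2 * a := by
    rw [abs_mul, ← sub_nonneg]
    have : c ^ 2 / a + d ^ 2 * a - 2 * (|c| * |d|) = (|c| - a * |d|) ^ 2 / a := by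
      field_simp; rw [← sq_abs c, ← sq_abs d]; ring
    rw [this]; positivity
  linarith

theorem quarter_add_le_of_mul_le {a b E P s : ℝ} (ha : 0 < a) (hb : 0 < b) (hab : a * b ≤ E)
    (hE : 4 ≤ E) (hP : P ≤ 1 / 4) (hs₀ : 0 ≤ s) (hs₁ : s ≤ 1) (c d : ℝ) :
    (1 / 4) * (c ^ 2 / a + d ^ 2 * E / b)
      ≤ c ^ 2 * (1 - P) / a + c * d * (1 - s) + d ^ 2 * (E - 1) / b := by
  have cross : -|c * d| ≤ c * d * (1 - s) := by
    have h : |c * d * (1 - s)| ≤ |c * d| := by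
      rw [abs_mul, abs_of_nonneg (by linarith : 0 ≤ 1 - s)]
      exact mul_le_of_le_one_right (abs_nonneg _) (by linarith)
    exact (neg_le_neg h).trans (neg_abs_le _)
  have hP' : P * (c ^ 2 / a) ≤ 1 / 4 * (c ^ 2 / a) := by gcongr
  have hE' : 4 * (d ^ 2 / b) ≤ E * (d ^ 2 / b) := by gcongr
  have := abs_mul_le_half_add ha hb hab c d
  have e₁ : c ^ 2 * (1 - P) / a = c ^ 2 / a - P * (c ^ 2 / a) := by ring
  have e₂ : d ^ 2 * (E - 1) / b = E * (d ^ 2 / b) - d ^ 2 / b := by ring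
  have e₃ : d ^ 2 * E / b = E * (d ^ 2 / b) := by ring
  linarith

theorem four_mul_sq_le_sixteen_pow {n : ℕ} (hn : 2 ≤ n) : 4 * n ^ 2 ≤ 16 ^ (n - 1) := by
  induction n, hn using Nat.le_induction with
  | base => norm_num
  | succ k hk ih =>
    have h : 16 ^ (k + 1 - 1) = 16 ^ (k - 1) * 16 := by rw [← pow_succ]; congr 1; omega
    rw [h]
    nlinarith

theorem zpow_two_sub_two_mul_eq_inv (ε : ℝ) {n : ℕ} (hn : 1 ≤ n) :
    ε ^ ((2:ℤ) - 2 * n) = ((ε ^ 2) ^ (n - 1))⁻¹ := by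
  rw [← pow_mul, ← zpow_natCast, ← zpow_neg]
  congr 1
  push_cast [Nat.cast_sub hn]
  ring

theorem mul_le_zpow_two_sub_two_mul {n : ℕ} (hn : 2 ≤ n) {ε : ℝ} (hε : 0 < ε)
    (hε₀ : ε ≤ 1 / 4) : (2 * n + 2) * (2 * n - 2) ≤ ε ^ ((2:ℤ) - 2 * n) := by
  have h16 : (16 : ℝ) ^ (n - 1) ≤ ((ε ^ 2) ^ (n - 1))⁻¹ := by
    rw [← inv_pow, ← one_div]
    gcongr
    rw [le_div_iff₀ (by positivity)]
    nlinarith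
  calc (2 * n + 2) * (2 * n - 2) ≤ (4 * n ^ 2 : ℝ) := by nlinarith
    _ ≤ 16 ^ (n - 1) := by exact_mod_cast four_mul_sq_le_sixteen_pow hn
    _ ≤ ε ^ ((2:ℤ) - 2 * n) := by rwa [zpow_two_sub_two_mul_eq_inv ε (by omega)]

/-- L² lower bound for harmonic Fourier modes of frequency `n ≥ 2` on an annulus, from
Step 2 of the proof of Proposition 3.2:
`∫_ε^1 (c rⁿ + d r^{−n})² r dr ≥ (1/4)(c²/(2n+2) + d² ε^{2−2n}/(2n−2))`. -/
theorem stmt12 : ∃ ε₀ : ℝ, 0 < ε₀ ∧ ε₀ ≤ 1 / 2 ∧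
    ∀ n : ℕ, 2 ≤ n → ∀ ε : ℝ, 0 < ε → ε ≤ ε₀ → ∀ c d : ℝ,
      (1 / 4) * (c ^ 2 / (2 * (n:ℝ) + 2)
          + d ^ 2 * ε ^ ((2:ℤ) - 2 * (n:ℤ)) / (2 * (n:ℝ) - 2))
        ≤ ∫ r in ε..1, (c * r ^ n + d * r ^ (-(n:ℤ))) ^ 2 * r := by
  refine ⟨1 / 4, by norm_num, by norm_num, fun n hn ε hε hε₀ c d => ?_⟩
  have hn' : (2 : ℝ) ≤ n := by exact_mod_cast hn
  have hab := mul_le_zpow_two_sub_two_mul hn hε hε₀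
  have hε₂ : ε ^ 2 ≤ 1 / 16 := by nlinarith
  have hP : ε ^ (2 * n + 2) ≤ 1 / 4 :=
    (pow_le_pow_of_le_one hε.le (by linarith) (by omega : 2 ≤ 2 * n + 2)).trans (by linarith)
  rw [integral_mode_sq_mul_self (by omega) hε]
  exact quarter_add_le_of_mul_le (by linarith) (by linarith) hab (by nlinarith) hP
    (sq_nonneg ε) (by linarith) c d
end

section
/- (Pohozaev identity for harmonic functions on an annulus, used in Step 2 of the proof of Proposition 3.2.) Let 0 ≤ r₁ < r₂ ≤ +∞ and let γ : ℝ² → ℝ be twice continuously differentiable with vanishing Laplacian on the annulus A = {x ∈ ℝ² : r₁ < ‖x‖ < r₂}. Then the function P(r) = ∫₀^{2π} ( r² (∂_r γ(r,θ))² − (∂_θ γ(r,θ))² ) dθ is constant on (r₁, r₂). -/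
open MeasureTheory Complex
open scoped ENNReal

/-! Since `γ` is harmonic, `f = ∂₁γ - i ∂₂γ` (that is, `2 ∂γ/∂z`) is holomorphic on the
annulus, hence so is `G z = (z f z)²`. On the circle `z = r e^{iθ}` one has
`z f z = r ∂_r γ - i ∂_θ γ`, so the Pohozaev integrand is `Re G z` and
`P r = Re ∫₀^{2π} G (r e^{iθ}) dθ = Re ∮ G z / (i z) dz`, which by Cauchy's theorem on the annulus
does not depend on `r`. -/

open Metric Set InnerProductSpace Laplacian Real

theorem laplacian_eq_fderiv_partial_add {F : Type*} [NormedAddCommGroup F] [NormedSpace ℝ F]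
    {f : ℂ → F} {z : ℂ} (hf : DifferentiableAt ℝ (fderiv ℝ f) z) :
    Δ f z = fderiv ℝ (fun w => fderiv ℝ f w 1) z 1 + fderiv ℝ (fun w => fderiv ℝ f w I) z I := by
  rw [laplacian_eq_iteratedFDeriv_complexPlane, fderiv_clm_apply hf (differentiableAt_const _),
    fderiv_clm_apply hf (differentiableAt_const _)]
  simp [iteratedFDeriv_two_apply]

theorem harmonicOnNhd_of_fderiv_partial_add_eq_zero {F : Type*} [NormedAddCommGroup F]
    [NormedSpace ℝ F] {f : ℂ → F} {U : Set ℂ} (hU : IsOpen U) (hf : ContDiffOn ℝ 2 f U)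
    (hΔ : ∀ z ∈ U,
      fderiv ℝ (fun w => fderiv ℝ f w 1) z 1 + fderiv ℝ (fun w => fderiv ℝ f w I) z I = 0) :
    HarmonicOnNhd f U := by
  refine fun z hz => ⟨hf.contDiffAt (hU.mem_nhds hz), ?_⟩
  filter_upwards [hU.mem_nhds hz] with w hw
  have hdiff : DifferentiableAt ℝ (fderiv ℝ f) w :=
    ((hf.contDiffAt (hU.mem_nhds hw)).fderiv_right le_rfl).differentiableAt one_ne_zero
  rw [laplacian_eq_fderiv_partial_add hdiff, hΔ w hw, Pi.zero_apply]

theorem integral_circleMap_eq_of_differentiableOn_annulus {E : Type*} [NormedAddCommGroup E]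
    [NormedSpace ℂ E] [CompleteSpace E] {f : ℂ → E} {c : ℂ} {r R : ℝ} (hr : 0 < r) (hrR : r ≤ R)
    (hf : DifferentiableOn ℂ f (closedBall c R \ ball c r)) :
    ∫ θ in 0..2 * π, f (circleMap c r θ) = ∫ θ in 0..2 * π, f (circleMap c R θ) := by
  have hcircle : (∮ z in C(c, R), (z - c)⁻¹ • f z) = ∮ z in C(c, r), (z - c)⁻¹ • f z := by
    refine circleIntegral_sub_center_inv_smul_eq_of_differentiable_on_annulus_off_countable hr hrR
      countable_empty hf.continuousOn fun z hz => hf.differentiableAt ?_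
    exact Filter.mem_of_superset ((isOpen_ball.sdiff isClosed_closedBall).mem_nhds hz.1)
      (sdiff_subset_sdiff ball_subset_closedBall ball_subset_closedBall)
  have haverage : circleAverage f c r = circleAverage f c R := by
    rw [circleAverage_eq_circleIntegral hr.ne', circleAverage_eq_circleIntegral
      (hr.trans_le hrR).ne', hcircle]
  rw [circleAverage_def, circleAverage_def] at haverage
  exact smul_right_injective E (inv_ne_zero two_pi_pos.ne') haverage

theorem re_sq_mul_sub_I_mul (L : ℂ →L[ℝ] ℝ) (w : ℂ) :
    ((w * (L 1 - I * L I)) ^ 2).re = L w ^ 2 - L (I * w) ^ 2 := by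
  have hdecomp : ∀ v : ℂ, L v = v.re * L 1 + v.im * L I := fun v => by
    conv_lhs => rw [show v = v.re • (1 : ℂ) + v.im • I by simp [real_smul]]
    rw [map_add, map_smul, map_smul, smul_eq_mul, smul_eq_mul]
  rw [hdecomp w, hdecomp (I * w)]
  simp only [pow_two, mul_re, mul_im, sub_re, sub_im, ofReal_re, ofReal_im, I_re, I_im]
  ring

def annulus (r₁ r₂ : ℝ≥0∞) : Set ℂ := {z | r₁ < (‖z‖₊ : ℝ≥0∞) ∧ (‖z‖₊ : ℝ≥0∞) < r₂}

theorem isOpen_annulus (r₁ r₂ : ℝ≥0∞) : IsOpen (annulus r₁ r₂) :=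
  isOpen_Ioo.preimage (ENNReal.continuous_coe.comp continuous_nnnorm)

theorem closedBall_sdiff_ball_subset_annulus {r₁ r₂ : ℝ≥0∞} {r R : ℝ} (hr : r₁ < .ofReal r)
    (hR : .ofReal R < r₂) : closedBall 0 R \ ball 0 r ⊆ annulus r₁ r₂ := by
  rintro z ⟨hzR, hzr⟩
  rw [mem_closedBall_zero_iff] at hzR
  rw [mem_ball_zero_iff, not_lt] at hzr
  rw [annulus, mem_ofPred_eq, ← enorm_eq_nnnorm, ← ofReal_norm]
  exact ⟨hr.trans_le (ENNReal.ofReal_le_ofReal hzr), (ENNReal.ofReal_le_ofReal hzR).trans_lt hR⟩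

noncomputable def complexPartial (γ : ℂ → ℝ) (z : ℂ) : ℂ := fderiv ℝ γ z 1 - I * fderiv ℝ γ z I

theorem integral_pohozaev_eq_re (γ : ℂ → ℝ) (r : ℝ)
    (hG : CircleIntegrable (fun z => (z * complexPartial γ z) ^ 2) 0 r) :
    ∫ θ in 0..2 * π, (r ^ 2 * (fderiv ℝ γ (r * exp (θ * I)) (exp (θ * I))) ^ 2
        - (fderiv ℝ γ (r * exp (θ * I)) (r * I * exp (θ * I))) ^ 2)
      = (∫ θ in 0..2 * π, (circleMap 0 r θ * complexPartial γ (circleMap 0 r θ)) ^ 2).re := by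
  refine (intervalIntegral.integral_congr fun θ _ => ?_).trans
    (intervalIntegral.intervalIntegral_re hG)
  simp only [RCLike.re_to_complex, complexPartial, re_sq_mul_sub_I_mul, circleMap_zero]
  rw [mul_right_comm, mul_comm I, ← real_smul, map_smul, smul_eq_mul]
  ring

theorem stmt14_general (r₁ r₂ : ℝ≥0∞) (γ : ℂ → ℝ)
    (hγ : ContDiffOn ℝ 2 γ {z : ℂ | r₁ < (‖z‖₊ : ℝ≥0∞) ∧ (‖z‖₊ : ℝ≥0∞) < r₂})
    (hharm : ∀ z : ℂ, r₁ < (‖z‖₊ : ℝ≥0∞) → (‖z‖₊ : ℝ≥0∞) < r₂ →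
      fderiv ℝ (fun w => fderiv ℝ γ w 1) z 1
        + fderiv ℝ (fun w => fderiv ℝ γ w I) z I = 0) :
    ∀ r r' : ℝ,
      r₁ < ENNReal.ofReal r → ENNReal.ofReal r < r₂ →
      r₁ < ENNReal.ofReal r' → ENNReal.ofReal r' < r₂ →
      (∫ θ in (0:ℝ)..(2 * Real.pi),
          (r ^ 2 * (fderiv ℝ γ (r * exp (θ * I)) (exp (θ * I))) ^ 2
            - (fderiv ℝ γ (r * exp (θ * I)) (r * I * exp (θ * I))) ^ 2))
        = ∫ θ in (0:ℝ)..(2 * Real.pi),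
            (r' ^ 2 * (fderiv ℝ γ (r' * exp (θ * I)) (exp (θ * I))) ^ 2
              - (fderiv ℝ γ (r' * exp (θ * I)) (r' * I * exp (θ * I))) ^ 2) := by
  have harmonic : HarmonicOnNhd γ (annulus r₁ r₂) :=
    harmonicOnNhd_of_fderiv_partial_add_eq_zero (isOpen_annulus r₁ r₂) hγ
      fun z hz => hharm z hz.1 hz.2
  have holomorphic : DifferentiableOn ℂ (fun z => (z * complexPartial γ z) ^ 2)
      (annulus r₁ r₂) := fun z hz =>
    ((differentiableAt_id.mul (HarmonicAt.differentiableAt_complex_partial (harmonic z hz))).pow 2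
      ).differentiableWithinAt
  have hpos : ∀ {ρ : ℝ}, r₁ < .ofReal ρ → 0 < ρ := fun h =>
    ENNReal.ofReal_pos.mp (bot_le.trans_lt h)
  have hre : ∀ ρ : ℝ, r₁ < .ofReal ρ → .ofReal ρ < r₂ → _ := fun ρ h₁ h₂ =>
    integral_pohozaev_eq_re γ ρ <| (holomorphic.continuousOn.mono <|
      closedBall_sdiff_ball.symm.subset.trans (closedBall_sdiff_ball_subset_annulus h₁ h₂)
      ).circleIntegrable (hpos h₁).le
  intro r r' hr₁ hr₂ hr₁' hr₂'
  wlog hle : r ≤ r' generalizing r r'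
  · exact (this r' r hr₁' hr₂' hr₁ hr₂ (le_of_not_ge hle)).symm
  rw [hre r hr₁ hr₂, hre r' hr₁' hr₂', integral_circleMap_eq_of_differentiableOn_annulus
    (hpos hr₁) hle (holomorphic.mono (closedBall_sdiff_ball_subset_annulus hr₁ hr₂'))]

/-- Pohozaev identity for harmonic functions on an annulus (Step 2 of the proof of
Proposition 3.2): if `γ` is C² with vanishing Laplacian on the annulus
`{r₁ < ‖z‖ < r₂}` (with `0 ≤ r₁ < r₂ ≤ +∞`), then
`P(r) = ∫₀^{2π} (r²(∂_r γ)² − (∂_θ γ)²) dθ` is constant on `(r₁, r₂)`. -/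
theorem stmt14 (r₁ r₂ : ℝ≥0∞) (h₁₂ : r₁ < r₂) (γ : ℂ → ℝ)
    (hγ : ContDiffOn ℝ 2 γ {z : ℂ | r₁ < (‖z‖₊ : ℝ≥0∞) ∧ (‖z‖₊ : ℝ≥0∞) < r₂})
    (hharm : ∀ z : ℂ, r₁ < (‖z‖₊ : ℝ≥0∞) → (‖z‖₊ : ℝ≥0∞) < r₂ →
      fderiv ℝ (fun w => fderiv ℝ γ w 1) z 1
        + fderiv ℝ (fun w => fderiv ℝ γ w I) z I = 0) :
    ∀ r r' : ℝ,
      r₁ < ENNReal.ofReal r → ENNReal.ofReal r < r₂ →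
      r₁ < ENNReal.ofReal r' → ENNReal.ofReal r' < r₂ →
      (∫ θ in (0:ℝ)..(2 * Real.pi),
          (r ^ 2 * (fderiv ℝ γ (r * exp (θ * I)) (exp (θ * I))) ^ 2
            - (fderiv ℝ γ (r * exp (θ * I)) (r * I * exp (θ * I))) ^ 2))
        = ∫ θ in (0:ℝ)..(2 * Real.pi),
            (r' ^ 2 * (fderiv ℝ γ (r' * exp (θ * I)) (exp (θ * I))) ^ 2
              - (fderiv ℝ γ (r' * exp (θ * I)) (r' * I * exp (θ * I))) ^ 2) :=
  stmt14_general r₁ r₂ γ hγ hharm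
end

section
/- (Tangential–normal derivative identity for decaying Laurent-type harmonic functions, from Step 2 of the proof of Proposition 3.2.) Let a, b ∈ ℝ, let N ≥ 1 be an integer and d₁, …, d_N ∈ ℂ, and define γ : ℝ² \ {0} → ℝ by γ(x) = a + b ln‖x‖ + Σ_{n=1}^N Re( dₙ (x₁ + i x₂)^{−n} ). Then for every r > 0: ∫₀^{2π} (∂_θ γ(r,θ))² dθ = r² ∫₀^{2π} (∂_r γ(r,θ))² dθ − 2π b². In particular ∫₀^{2π} (∂_θ γ(r,θ))² dθ ≤ r² ∫₀^{2π} (∂_r γ(r,θ))² dθ. -/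
/-!
Write `γ = b log ‖z‖ + Re Q(1/z)` with `Q` entire. Then `dγ_z(v) = Re (P(1/z) · v / z)` with
`P(w) = b - w Q'(w)`, so along the circle `|z| = r` the angular derivative `dγ_z(iz)` is
`-Im P(1/z)` and the scaled radial derivative `dγ_z(z)` is `Re P(1/z)`. Their squares differ by
`Re (P(1/z)²)`, whose circle average is `Re (P(0)²) = b²` by the mean value property of the entire
function `P²`, read in the variable `1/z`.
-/

open MeasureTheory Complex

lemma hasFDerivAt_log_norm {z : ℂ} (hz : z ≠ 0) :
    HasFDerivAt (fun w : ℂ => Real.log ‖w‖) (reCLM.comp (z⁻¹ • (1 : ℂ →L[ℝ] ℂ))) z := by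
  have hsq : HasFDerivAt (fun w : ℂ => Real.log (‖w‖ ^ 2))
      ((‖z‖ ^ 2)⁻¹ • 2 • (innerSL ℝ z).comp (ContinuousLinearMap.id ℝ ℂ)) z :=
    ((hasFDerivAt_id z).norm_sq).log (by positivity)
  have hhalf := hsq.const_mul (1 / 2 : ℝ)
  simp only [Real.log_pow] at hhalf
  refine (hhalf.congr_fderiv ?_).congr_of_eventuallyEq (Filter.Eventually.of_forall fun w => ?_)
  · ext v
    simp only [one_div, ← normSq_eq_norm_sq, ContinuousLinearMap.comp_id, smul_apply,
      coe_innerSL_apply, Complex.inner, mul_re, conj_re, conj_im, mul_neg, sub_neg_eq_add,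
      smul_add, nsmul_eq_mul, Nat.cast_ofNat, smul_eq_mul, ContinuousLinearMap.comp_apply,
      one_apply_eq_self, reCLM_apply, inv_re, inv_im]
    ring
  · simp only
    ring

lemma hasFDerivAt_log_norm_add_re_comp_inv (b : ℝ) {Q : ℂ → ℂ} {z : ℂ} (hz : z ≠ 0)
    (hQ : DifferentiableAt ℂ Q z⁻¹) :
    HasFDerivAt (fun w => b * Real.log ‖w‖ + (Q w⁻¹).re)
      (reCLM.comp (((b - z⁻¹ * deriv Q z⁻¹) / z) • (1 : ℂ →L[ℝ] ℂ))) z := by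
  have hQinv : HasDerivAt (fun w => Q w⁻¹) (deriv Q z⁻¹ * -(z ^ 2)⁻¹) z :=
    hQ.hasDerivAt.comp z (hasDerivAt_inv hz)
  refine (((hasFDerivAt_log_norm hz).const_mul b).add
    (reCLM.hasFDerivAt.comp z hQinv.complexToReal_fderiv)).congr_fderiv ?_
  ext v
  simp only [ContinuousLinearMap.comp_apply, smul_apply, one_apply_eq_self, add_apply,
    reCLM_apply, smul_eq_mul]
  rw [← re_ofReal_mul, ← add_re]
  congr 1
  field_simp
  ring

lemma fderiv_apply_of_eq_log_norm_add_re_comp_inv {γ : ℂ → ℝ} {b : ℝ} {Q : ℂ → ℂ}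
    (hγ : ∀ z ≠ 0, γ z = b * Real.log ‖z‖ + (Q z⁻¹).re) (hQ : Differentiable ℂ Q)
    {z : ℂ} (hz : z ≠ 0) (v : ℂ) :
    fderiv ℝ γ z v = ((b - z⁻¹ * deriv Q z⁻¹) * (v / z)).re := by
  have hγ_nhds : γ =ᶠ[nhds z] fun w => b * Real.log ‖w‖ + (Q w⁻¹).re :=
    Filter.mem_of_superset (isOpen_compl_singleton.mem_nhds hz) hγ
  rw [((hasFDerivAt_log_norm_add_re_comp_inv b hz (hQ _)).congr_of_eventuallyEq hγ_nhds).fderiv]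
  simp only [ContinuousLinearMap.comp_apply, smul_apply, one_apply_eq_self, reCLM_apply,
    smul_eq_mul]
  ring_nf

section CircleAverage

open Real

lemma circleAverage_comp_inv {E : Type*} [NormedAddCommGroup E] [NormedSpace ℂ E]
    [CompleteSpace E] {f : ℂ → E} {R : ℝ} (hf : DiffContOnCl ℂ f (Metric.ball 0 |R|⁻¹)) :
    circleAverage (fun z => f z⁻¹) 0 R = f 0 := by
  rw [circleAverage_eq_circleAverage_zero_one]
  have hinv : (fun z : ℂ => f (R * z + 0)⁻¹) = fun z => (fun w => f ((R⁻¹ : ℝ) * w + 0)) z⁻¹ := by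
    ext z
    simp [mul_comm]
  rw [hinv, circleAverage_zero_one_congr_inv (f := fun w => f ((R⁻¹ : ℝ) * w + 0)),
    ← circleAverage_eq_circleAverage_zero_one]
  exact DiffContOnCl.circleAverage (by rwa [abs_inv])

lemma intervalIntegral_comp_mul_exp_eq_smul_circleAverage {E : Type*} [NormedAddCommGroup E]
    [NormedSpace ℝ E] (f : ℂ → E) (r : ℝ) :
    ∫ θ in (0:ℝ)..(2 * π), f (r * exp (θ * I)) = (2 * π) • circleAverage f 0 r := by
  rw [circleAverage_def, smul_inv_smul₀ (by positivity)]
  simp [circleMap]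

theorem circleAverage_sq_fderiv_I_mul_eq {γ : ℂ → ℝ} {b : ℝ} {Q : ℂ → ℂ}
    (hγ : ∀ z ≠ 0, γ z = b * Real.log ‖z‖ + (Q z⁻¹).re) (hQ : Differentiable ℂ Q)
    {r : ℝ} (hr : r ≠ 0) :
    circleAverage (fun z => (fderiv ℝ γ z (I * z)) ^ 2) 0 r
      = circleAverage (fun z => (fderiv ℝ γ z z) ^ 2) 0 r - b ^ 2 := by
  set P : ℂ → ℂ := fun w => b - w * deriv Q w
  have hP : Differentiable ℂ P := (differentiable_const _).sub (differentiable_id.mul hQ.deriv)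
  have hz : ∀ z ∈ Metric.sphere (0 : ℂ) |r|, z ≠ 0 := by
    rintro z hz rfl
    simp [eq_comm, hr] at hz
  have hangular : Set.EqOn (fun z => (fderiv ℝ γ z (I * z)) ^ 2) (fun z => (P z⁻¹).im ^ 2)
      (Metric.sphere 0 |r|) := fun z hzr => by
    simp only [fderiv_apply_of_eq_log_norm_add_re_comp_inv hγ hQ (hz z hzr),
      mul_div_cancel_right₀ _ (hz z hzr), mul_I_re, neg_sq, P]
  have hradial : Set.EqOn (fun z => (fderiv ℝ γ z z) ^ 2) (fun z => (P z⁻¹).re ^ 2)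
      (Metric.sphere 0 |r|) := fun z hzr => by
    simp only [fderiv_apply_of_eq_log_norm_add_re_comp_inv hγ hQ (hz z hzr),
      div_self (hz z hzr), mul_one, P]
  have hcont : ContinuousOn (fun z => P z⁻¹) (Metric.sphere 0 |r|) :=
    hP.continuous.comp_continuousOn (continuousOn_inv₀.mono hz)
  have hre : CircleIntegrable (fun z => (P z⁻¹).re ^ 2) 0 r :=
    ((continuous_re.comp_continuousOn hcont).pow 2).circleIntegrable'
  have him : CircleIntegrable (fun z => (P z⁻¹).im ^ 2) 0 r :=
    ((continuous_im.comp_continuousOn hcont).pow 2).circleIntegrable'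
  have hmean : circleAverage (fun z => (P z⁻¹).re ^ 2 - (P z⁻¹).im ^ 2) 0 r = b ^ 2 := by
    calc circleAverage (fun z => (P z⁻¹).re ^ 2 - (P z⁻¹).im ^ 2) 0 r
        = circleAverage (reCLM ∘ fun z => (fun w => P w ^ 2) z⁻¹) 0 r := by
          congr with z
          simp [sq, mul_re]
      _ = (P 0 ^ 2).re := by
          rw [reCLM.circleAverage_comp_comm
              (show CircleIntegrable (fun z => P z⁻¹ ^ 2) 0 r from (hcont.pow 2).circleIntegrable'),
            circleAverage_comp_inv (f := fun w => P w ^ 2) (hP.pow 2).diffContOnCl, reCLM_apply]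
      _ = b ^ 2 := by simp [P, sq]
  rw [circleAverage_congr_sphere hangular, circleAverage_congr_sphere hradial, ← hmean,
    circleAverage_fun_sub hre him]
  ring

theorem integral_sq_fderiv_angular_eq {γ : ℂ → ℝ} {b : ℝ} {Q : ℂ → ℂ}
    (hγ : ∀ z ≠ 0, γ z = b * Real.log ‖z‖ + (Q z⁻¹).re) (hQ : Differentiable ℂ Q)
    {r : ℝ} (hr : r ≠ 0) :
    ∫ θ in (0:ℝ)..(2 * π), (fderiv ℝ γ (r * exp (θ * I)) (r * I * exp (θ * I))) ^ 2
      = r ^ 2 * (∫ θ in (0:ℝ)..(2 * π), (fderiv ℝ γ (r * exp (θ * I)) (exp (θ * I))) ^ 2)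
        - 2 * π * b ^ 2 := by
  have hangular :
      ∫ θ in (0:ℝ)..(2 * π), (fderiv ℝ γ (r * exp (θ * I)) (r * I * exp (θ * I))) ^ 2
        = 2 * π * circleAverage (fun z => (fderiv ℝ γ z (I * z)) ^ 2) 0 r := by
    rw [← smul_eq_mul (2 * π), ← intervalIntegral_comp_mul_exp_eq_smul_circleAverage]
    congr with θ
    ring_nf
  have hradial :
      r ^ 2 * ∫ θ in (0:ℝ)..(2 * π), (fderiv ℝ γ (r * exp (θ * I)) (exp (θ * I))) ^ 2
        = 2 * π * circleAverage (fun z => (fderiv ℝ γ z z) ^ 2) 0 r := by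
    rw [← smul_eq_mul (2 * π), ← intervalIntegral_comp_mul_exp_eq_smul_circleAverage,
      ← intervalIntegral.integral_const_mul]
    congr with θ
    rw [← real_smul, map_smul, smul_eq_mul]
    ring
  rw [hangular, hradial, circleAverage_sq_fderiv_I_mul_eq hγ hQ hr]
  ring

end CircleAverage

theorem stmt15_general (a b : ℝ) (N : ℕ) (d : ℕ → ℂ) (γ : ℂ → ℝ)
    (hγ : ∀ z : ℂ, z ≠ 0 →
      γ z = a + b * Real.log ‖z‖ + ∑ n ∈ Finset.Icc 1 N, (d n * z ^ (-(n:ℤ))).re)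
    (r : ℝ) (hr : 0 < r) :
    (∫ θ in (0:ℝ)..(2 * Real.pi),
        (fderiv ℝ γ (r * exp (θ * I)) (r * I * exp (θ * I))) ^ 2)
      = r ^ 2 * (∫ θ in (0:ℝ)..(2 * Real.pi),
          (fderiv ℝ γ (r * exp (θ * I)) (exp (θ * I))) ^ 2)
        - 2 * Real.pi * b ^ 2
    ∧ (∫ θ in (0:ℝ)..(2 * Real.pi),
        (fderiv ℝ γ (r * exp (θ * I)) (r * I * exp (θ * I))) ^ 2)
      ≤ r ^ 2 * ∫ θ in (0:ℝ)..(2 * Real.pi),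
          (fderiv ℝ γ (r * exp (θ * I)) (exp (θ * I))) ^ 2 := by
  set Q : ℂ → ℂ := fun w => a + ∑ n ∈ Finset.Icc 1 N, d n * w ^ n
  have hγQ : ∀ z ≠ 0, γ z = b * Real.log ‖z‖ + (Q z⁻¹).re := fun z hz => by
    simp only [hγ z hz, Q, add_re, ofReal_re, re_sum, zpow_neg, zpow_natCast, inv_pow]
    ring
  have hidentity := integral_sq_fderiv_angular_eq hγQ (by fun_prop) hr.ne'
  exact ⟨hidentity, by nlinarith [Real.pi_pos, sq_nonneg b]⟩

/-- Tangential–normal derivative identity for decaying Laurent-type harmonic functions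
(Step 2 of the proof of Proposition 3.2): for
`γ(x) = a + b ln‖x‖ + Σ_{n=1}^N Re(dₙ (x₁+ix₂)^{−n})` and every `r > 0`,
`∫₀^{2π} (∂_θ γ)² dθ = r² ∫₀^{2π} (∂_r γ)² dθ − 2π b²`; in particular
`∫₀^{2π} (∂_θ γ)² dθ ≤ r² ∫₀^{2π} (∂_r γ)² dθ`. -/
theorem stmt15 (a b : ℝ) (N : ℕ) (hN : 1 ≤ N) (d : ℕ → ℂ) (γ : ℂ → ℝ)
    (hγ : ∀ z : ℂ, z ≠ 0 →
      γ z = a + b * Real.log ‖z‖ + ∑ n ∈ Finset.Icc 1 N, (d n * z ^ (-(n:ℤ))).re)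
    (r : ℝ) (hr : 0 < r) :
    (∫ θ in (0:ℝ)..(2 * Real.pi),
        (fderiv ℝ γ (r * exp (θ * I)) (r * I * exp (θ * I))) ^ 2)
      = r ^ 2 * (∫ θ in (0:ℝ)..(2 * Real.pi),
          (fderiv ℝ γ (r * exp (θ * I)) (exp (θ * I))) ^ 2)
        - 2 * Real.pi * b ^ 2
    ∧ (∫ θ in (0:ℝ)..(2 * Real.pi),
        (fderiv ℝ γ (r * exp (θ * I)) (r * I * exp (θ * I))) ^ 2)
      ≤ r ^ 2 * ∫ θ in (0:ℝ)..(2 * Real.pi),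
          (fderiv ℝ γ (r * exp (θ * I)) (exp (θ * I))) ^ 2 :=
  stmt15_general a b N d γ hγ r hr
end
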